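/- arXiv:1208.4995 — 2 statements merged into one kernel-verified Lean document; each statement's English description precedes it below -/
import Mathlib

section
/- For any finite simple graphs G and H, λ(G × H) ≤ ψ(G,H), where ψ(G,H) = ρ(G)·|E(H)| + 2·φ(H)·|E(G)|, ρ(G) = min{2·φ([A]) + |[A,B]| : {A,B} a partition of V(G) with A nonempty}, and φ denotes the bipartite edge frustration. -/
open SimpleGraph

/-- The direct (tensor) product of two simple graphs. -/
def tensorProd {α β : Type*} (G : SimpleGraph α) (H : SimpleGraph β) :
    SimpleGraph (α × β) where
  Adj p q := G.Adj p.1 q.1 ∧ H.Adj p.2 q.2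
  symm := ⟨fun _ _ h => ⟨h.1.symm, h.2.symm⟩⟩
  loopless := ⟨fun p h => G.loopless.irrefl p.1 h.1⟩

instance {α β : Type*} (G : SimpleGraph α) (H : SimpleGraph β)
    [DecidableRel G.Adj] [DecidableRel H.Adj] :
    DecidableRel (tensorProd G H).Adj :=
  fun p q => inferInstanceAs (Decidable (G.Adj p.1 q.1 ∧ H.Adj p.2 q.2))

/-- The edge connectivity of a graph: the least size of a set of edges whose
deletion disconnects the graph. -/
noncomputable def edgeConn {V : Type*} (G : SimpleGraph V) : ℕ :=
  sInf {n | ∃ S ⊆ G.edgeSet, ¬ (G.deleteEdges S).Connected ∧ S.ncard = n}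

/-- The bipartite edge frustration: the least number of edges whose deletion
makes the graph bipartite. -/
noncomputable def frustration {V : Type*} (G : SimpleGraph V) : ℕ :=
  sInf {n | ∃ S ⊆ G.edgeSet, ((G.deleteEdges S).Colorable 2) ∧ S.ncard = n}

/-- ρ(G) = min over partitions {A, Aᶜ} of V(G) with A nonempty of
2·φ(G[A]) + |[A, Aᶜ]|. -/
noncomputable def rho {V : Type*} (G : SimpleGraph V) : ℕ :=
  sInf {n | ∃ A : Set V, A.Nonempty ∧
    n = 2 * frustration (G.induce A) +
      {e ∈ G.edgeSet | ∃ a ∈ A, ∃ b ∉ A, e = s(a, b)}.ncard}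

/-- ψ(G,H) = ρ(G)·|E(H)| + 2·φ(H)·|E(G)|. -/
noncomputable def psi {α β : Type*} (G : SimpleGraph α) (H : SimpleGraph β) : ℕ :=
  rho G * H.edgeSet.ncard + 2 * frustration H * G.edgeSet.ncard

/-!
Take a partition `{A, Aᶜ}` of `V(G)` realising `ρ(G)`, a set `F_A` of `φ([A])` edges of `[A]`
whose removal leaves a proper 2-colouring `c` of `A`, and likewise `F_H` and a 2-colouring `d`
of `H - F_H`. Let `T = {(g, h) | g ∈ A, c g = d h}`. An edge `(g, h)(g', h')` of `G × H`
leaving `T` has `hh' ∈ F_H`, or `gg' ∈ F_A`, or else `gg' ∈ [A, Aᶜ]`; every edge of `G` or `H`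
lifts to two edges of `G × H`, but for `gg' ∈ [A, Aᶜ]` and `hh' ∉ F_H` only one of the two
lifts leaves `T`. Hence `|[T, Tᶜ]| ≤ ψ(G, H)`. If `T` is empty or everything, `d` is constant,
so `F_H = E(H)` and the bound `λ(G × H) ≤ |E(G × H)| ≤ 2|E(G)||E(H)|` suffices.
-/

lemma Fin.two_eq_of_ne_of_ne {a b c : Fin 2} (ha : a ≠ c) (hb : b ≠ c) : a = b := by
  omega

lemma Sym2.eq_or_eq_of_map_fst_of_map_snd {α β : Type*} {e : Sym2 (α × β)} {a a' : α} {b b' : β}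
    (h1 : e.map Prod.fst = s(a, a')) (h2 : e.map Prod.snd = s(b, b')) :
    e = s((a, b), (a', b')) ∨ e = s((a, b'), (a', b)) := by
  induction e using Sym2.ind with
  | _ p q =>
    rw [Sym2.map_mk, Sym2.eq_iff] at h1 h2
    obtain ⟨rfl, rfl⟩ | ⟨rfl, rfl⟩ := h1 <;> obtain ⟨rfl, rfl⟩ | ⟨rfl, rfl⟩ := h2 <;>
      simp [Sym2.eq_swap]

lemma Sym2.ncard_setOf_map_fst_snd_mem_le {α β : Type*} [Finite α] [Finite β]
    (K : Set (Sym2 α)) (L : Set (Sym2 β)) :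
    {e : Sym2 (α × β) | e.map Prod.fst ∈ K ∧ e.map Prod.snd ∈ L}.ncard ≤
      2 * (K.ncard * L.ncard) := by
  classical
  have := Fintype.ofFinite α
  have := Fintype.ofFinite β
  rw [← Set.ncard_prod, Set.ncard_eq_toFinset_card', Set.ncard_eq_toFinset_card']
  refine Finset.card_le_mul_card_image_of_maps_to
    (f := fun e => (e.map Prod.fst, e.map Prod.snd)) (fun e he => by simpa using he) 2 ?_
  rintro ⟨k, l⟩ -
  induction k using Sym2.ind with | _ a a' =>
  induction l using Sym2.ind with | _ b b' =>
  refine (Finset.card_le_card (t := {s((a, b), (a', b')), s((a, b'), (a', b))}) ?_).trans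
    Finset.card_le_two
  intro e he
  simp only [Finset.mem_filter, Prod.mk.injEq] at he
  simpa using Sym2.eq_or_eq_of_map_fst_of_map_snd he.2.1 he.2.2

namespace SimpleGraph

section Cut

variable {V : Type*} (G : SimpleGraph V)

def cutEdges (A : Set V) : Set (Sym2 V) :=
  {e ∈ G.edgeSet | ∃ a ∈ A, ∃ b ∉ A, e = s(a, b)}

variable {G}

lemma cutEdges_subset_edgeSet (A : Set V) : G.cutEdges A ⊆ G.edgeSet := fun _ he => he.1

lemma mk_mem_cutEdges {A : Set V} {a b : V} (hab : G.Adj a b) (ha : a ∈ A) (hb : b ∉ A) :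
    s(a, b) ∈ G.cutEdges A :=
  ⟨hab, a, ha, b, hb, rfl⟩

lemma not_connected_deleteEdges_cutEdges {A : Set V} (hA : A.Nonempty) (hA' : Aᶜ.Nonempty) :
    ¬ (G.deleteEdges (G.cutEdges A)).Connected := by
  obtain ⟨u, hu⟩ := hA
  obtain ⟨v, hv⟩ := hA'
  intro hconn
  obtain ⟨p⟩ := hconn.preconnected u v
  obtain ⟨d, -, hd, hd'⟩ := p.exists_boundary_dart A hu hv
  have hadj := deleteEdges_adj.1 d.adj
  exact hadj.2 (mk_mem_cutEdges hadj.1 hd hd')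

lemma edgeConn_le_ncard {S : Set (Sym2 V)} (hS : S ⊆ G.edgeSet)
    (hdisc : ¬ (G.deleteEdges S).Connected) : edgeConn G ≤ S.ncard :=
  Nat.sInf_le ⟨S, hS, hdisc, rfl⟩

lemma edgeConn_le_ncard_cutEdges {A : Set V} (hA : A.Nonempty) (hA' : Aᶜ.Nonempty) :
    edgeConn G ≤ (G.cutEdges A).ncard :=
  edgeConn_le_ncard (cutEdges_subset_edgeSet A) (not_connected_deleteEdges_cutEdges hA hA')

lemma edgeConn_eq_zero_of_subsingleton [Subsingleton V] : edgeConn G = 0 := by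
  refine Nat.sInf_eq_zero.2 ?_
  rcases isEmpty_or_nonempty V with _ | _
  · exact .inl ⟨∅, Set.empty_subset _, fun h => h.nonempty.elim isEmptyElim, Set.ncard_empty _⟩
  · exact .inr (Set.eq_empty_of_forall_notMem fun n ⟨S, _, hS, _⟩ => hS .of_subsingleton)

lemma edgeConn_le_ncard_edgeSet [Finite V] : edgeConn G ≤ G.edgeSet.ncard := by
  rcases subsingleton_or_nontrivial V with _ | ⟨u, v, huv⟩
  · exact edgeConn_eq_zero_of_subsingleton.trans_le (Nat.zero_le _)
  · exact (edgeConn_le_ncard_cutEdges (A := {u}) ⟨u, rfl⟩ ⟨v, huv.symm⟩).trans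
      (Set.ncard_le_ncard (cutEdges_subset_edgeSet _))

end Cut

section Frustration

variable {V : Type*} (G : SimpleGraph V)

lemma exists_ncard_eq_frustration_coloring :
    ∃ F : Set (Sym2 V), F.ncard = frustration G ∧
      ∃ c : V → Fin 2, ∀ ⦃x y⦄, G.Adj x y → s(x, y) ∉ F → c x ≠ c y := by
  have hne : {n | ∃ S ⊆ G.edgeSet, (G.deleteEdges S).Colorable 2 ∧ S.ncard = n}.Nonempty :=
    ⟨_, G.edgeSet, subset_rfl, ⟨Coloring.mk (fun _ => 0) fun h => by simp at h⟩, rfl⟩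
  obtain ⟨F, -, ⟨c⟩, hF⟩ := Nat.sInf_mem hne
  exact ⟨F, hF, c, fun x y hxy hxyF => c.valid (deleteEdges_adj.2 ⟨hxy, hxyF⟩)⟩

lemma exists_ncard_eq_frustration_induce_coloring (A : Set V) :
    ∃ F : Set (Sym2 V), F.ncard = frustration (G.induce A) ∧
      ∃ c : V → Fin 2, ∀ ⦃x y⦄, x ∈ A → y ∈ A → G.Adj x y → s(x, y) ∉ F → c x ≠ c y := by
  classical
  obtain ⟨F, hF, c, hc⟩ := (G.induce A).exists_ncard_eq_frustration_coloring
  refine ⟨Sym2.map Subtype.val '' F, ?_, fun x => if hx : x ∈ A then c ⟨x, hx⟩ else 0, ?_⟩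
  · rw [Set.ncard_image_of_injective _ (Sym2.map.injective Subtype.val_injective), hF]
  · intro x y hx hy hxy hxyF
    simp only [dif_pos hx, dif_pos hy]
    exact hc hxy fun hF' => hxyF ⟨_, hF', rfl⟩

end Frustration

lemma exists_rho_eq {V : Type*} [Nonempty V] (G : SimpleGraph V) :
    ∃ A : Set V, A.Nonempty ∧ rho G = 2 * frustration (G.induce A) + (G.cutEdges A).ncard := by
  have hne : {n | ∃ A : Set V, A.Nonempty ∧
      n = 2 * frustration (G.induce A) + (G.cutEdges A).ncard}.Nonempty :=
    ⟨_, Set.univ, Set.univ_nonempty, rfl⟩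
  exact Nat.sInf_mem hne

section Tensor

variable {α β : Type*} (G : SimpleGraph α) (H : SimpleGraph β)

lemma edgeSet_tensorProd_subset :
    (tensorProd G H).edgeSet ⊆
      {e | e.map Prod.fst ∈ G.edgeSet ∧ e.map Prod.snd ∈ H.edgeSet} := by
  intro e he
  induction e using Sym2.ind with
  | _ p q => exact he

lemma ncard_edgeSet_tensorProd_le [Finite α] [Finite β] :
    (tensorProd G H).edgeSet.ncard ≤ 2 * (G.edgeSet.ncard * H.edgeSet.ncard) :=
  (Set.ncard_le_ncard (edgeSet_tensorProd_subset G H)).trans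
    (Sym2.ncard_setOf_map_fst_snd_mem_le _ _)

def crossingEdges (A : Set α) (c : α → Fin 2) (d : β → Fin 2) : Set (Sym2 (α × β)) :=
  {e | ∃ p q : α × β, (tensorProd G H).Adj p q ∧ p.1 ∈ A ∧ c p.1 = d p.2 ∧ q.1 ∉ A ∧
    d p.2 ≠ d q.2 ∧ e = s(p, q)}

variable {G H} {A : Set α} {c : α → Fin 2} {d : β → Fin 2}

lemma ncard_crossingEdges_le [Finite α] [Finite β] :
    (crossingEdges G H A c d).ncard ≤ (G.cutEdges A).ncard * H.edgeSet.ncard := by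
  rw [← Set.ncard_prod]
  refine Set.ncard_le_ncard_of_injOn (fun e => (e.map Prod.fst, e.map Prod.snd)) ?_ ?_
  · rintro _ ⟨p, q, hpq, hp, -, hq, -, rfl⟩
    exact ⟨mk_mem_cutEdges hpq.1 hp hq, hpq.2⟩
  -- The projections determine the edge: its first coordinates are oriented by `A`, and then
  -- its second ones by the colour `d`, which differs at the two ends.
  · rintro _ ⟨p, q, -, hp, hpc, hq, hpq, rfl⟩ _ ⟨p', q', -, -, hpc', hq', -, rfl⟩ h
    simp only [Sym2.map_mk, Prod.mk.injEq, Sym2.eq_iff] at h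
    obtain ⟨⟨h1, h1'⟩ | ⟨h1, -⟩, ⟨h2, h2'⟩ | ⟨-, h2'⟩⟩ := h
    · rw [Prod.ext h1 h2, Prod.ext h1' h2']
    · exact absurd (by rw [← hpc, h1, hpc', h2']) hpq
    all_goals exact absurd (h1 ▸ hp) hq'

variable {FA : Set (Sym2 α)} {FH : Set (Sym2 β)}

lemma cutEdges_tensorProd_subset
    (hc : ∀ ⦃x y⦄, x ∈ A → y ∈ A → G.Adj x y → s(x, y) ∉ FA → c x ≠ c y)
    (hd : ∀ ⦃x y⦄, H.Adj x y → s(x, y) ∉ FH → d x ≠ d y) :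
    (tensorProd G H).cutEdges {p | p.1 ∈ A ∧ c p.1 = d p.2} ⊆
      {e | e.map Prod.fst ∈ FA ∧ e.map Prod.snd ∈ H.edgeSet} ∪ crossingEdges G H A c d ∪
        {e | e.map Prod.fst ∈ G.edgeSet ∧ e.map Prod.snd ∈ FH} := by
  rintro _ ⟨hpq, p, ⟨hp, hpc⟩, q, hq, rfl⟩
  have hG : G.Adj p.1 q.1 := hpq.1
  have hH : H.Adj p.2 q.2 := hpq.2
  simp only [Set.mem_union, Set.mem_ofPred_eq, Sym2.map_mk]
  by_cases hFH : s(p.2, q.2) ∈ FH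
  · exact .inr ⟨hG, hFH⟩
  by_cases hqA : q.1 ∈ A
  · have hcq : c q.1 = c p.1 :=
      Fin.two_eq_of_ne_of_ne (fun h => hq ⟨hqA, h⟩) (hpc ▸ hd hH hFH)
    exact .inl (.inl ⟨not_not.1 fun h => hc hp hqA hG h hcq.symm, hH⟩)
  · exact .inl (.inr ⟨p, q, hpq, hp, hpc, hqA, hd hH hFH, rfl⟩)

lemma ncard_cutEdges_tensorProd_le [Finite α] [Finite β]
    (hc : ∀ ⦃x y⦄, x ∈ A → y ∈ A → G.Adj x y → s(x, y) ∉ FA → c x ≠ c y)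
    (hd : ∀ ⦃x y⦄, H.Adj x y → s(x, y) ∉ FH → d x ≠ d y) :
    ((tensorProd G H).cutEdges {p | p.1 ∈ A ∧ c p.1 = d p.2}).ncard ≤
      (2 * FA.ncard + (G.cutEdges A).ncard) * H.edgeSet.ncard +
        2 * FH.ncard * G.edgeSet.ncard := by
  grw [Set.ncard_le_ncard (cutEdges_tensorProd_subset hc hd), Set.ncard_union_le,
    Set.ncard_union_le, Sym2.ncard_setOf_map_fst_snd_mem_le, ncard_crossingEdges_le,
    Sym2.ncard_setOf_map_fst_snd_mem_le]
  linarith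

end Tensor

end SimpleGraph

open SimpleGraph

theorem edgeConn_tensor_le_psi {α β : Type*} [Fintype α] [Fintype β]
    (G : SimpleGraph α) (H : SimpleGraph β) :
    edgeConn (tensorProd G H) ≤ psi G H := by
  cases isEmpty_or_nonempty α
  · simp [edgeConn_eq_zero_of_subsingleton]
  obtain ⟨A, ⟨a, ha⟩, hρ⟩ := G.exists_rho_eq
  obtain ⟨FA, hFA, c, hc⟩ := G.exists_ncard_eq_frustration_induce_coloring A
  obtain ⟨FH, hFH, d, hd⟩ := H.exists_ncard_eq_frustration_coloring
  set T := {p : α × β | p.1 ∈ A ∧ c p.1 = d p.2}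
  by_cases hT : T.Nonempty ∧ Tᶜ.Nonempty
  · rw [psi, hρ, ← hFA, ← hFH]
    exact (edgeConn_le_ncard_cutEdges hT.1 hT.2).trans (ncard_cutEdges_tensorProd_le hc hd)
  have hconst : ∀ y y', d y = d y' := by
    by_contra! ⟨y, y', hyy'⟩
    refine hT ?_
    rcases eq_or_ne (c a) (d y) with h | h
    · exact ⟨⟨(a, y), ha, h⟩, (a, y'), fun h' => hyy' (h.symm.trans h'.2)⟩
    · exact ⟨⟨(a, y'), ha, Fin.two_eq_of_ne_of_ne h hyy'.symm⟩, (a, y), fun h' => h h'.2⟩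
  have hEH : H.edgeSet ⊆ FH := by
    intro e he
    induction e using Sym2.ind with
    | _ y y' => exact not_not.1 fun h => hd he h (hconst y y')
  calc edgeConn (tensorProd G H) ≤ 2 * (G.edgeSet.ncard * H.edgeSet.ncard) :=
        edgeConn_le_ncard_edgeSet.trans (ncard_edgeSet_tensorProd_le G H)
    _ ≤ 2 * frustration H * G.edgeSet.ncard := by
      grw [Set.ncard_le_ncard hEH, hFH]
      linarith
    _ ≤ psi G H := Nat.le_add_left _ _
end

section
/- Let G and H be finite simple connected graphs and suppose that for a minimum edge-cut S of G × H with components B and W, every set N_G(x) × {y} lies entirely in B or entirely in W. If for some y ∈ V(H) there exist adjacent vertices x1, x2 of G with (x1,y) and (x2,y) both in B, then the entire G-layer G_y = V(G) × {y} is contained in B. -/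
open SimpleGraph

/-!
Call a vertex `x` of `G` saturated when `(x, y)` and all of `N_G(x) × {y}` lie in `B`. If `x` is
saturated and `x ~ x'`, then `(x', y) ∈ B` and `N_G(x') × {y}` meets `B` in `(x, y)`, so by the
dichotomy it lies in `B`: saturation spreads along edges. The edge `x1 x2` makes `x1` saturated,
and connectivity of `G` finishes the argument.
-/

namespace SimpleGraph

variable {V : Type*} {G : SimpleGraph V}

theorem Walk.mem_of_adj_closed {P : Set V} (hP : ∀ ⦃u v⦄, G.Adj u v → u ∈ P → v ∈ P)
    {u v : V} (p : G.Walk u v) (hu : u ∈ P) : v ∈ P := by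
  induction p with
  | nil => exact hu
  | cons h _ ih => exact ih (hP h hu)

theorem Connected.mem_of_adj_closed (hG : G.Connected) {P : Set V}
    (hP : ∀ ⦃u v⦄, G.Adj u v → u ∈ P → v ∈ P) {u : V} (hu : u ∈ P) (v : V) : v ∈ P :=
  (hG.preconnected u v).some.mem_of_adj_closed hP hu

theorem Connected.mem_of_neighborSet_subset_or_disjoint (hG : G.Connected) {B : Set V}
    (hB : ∀ x, G.neighborSet x ⊆ B ∨ Disjoint (G.neighborSet x) B)
    {x₁ x₂ : V} (hadj : G.Adj x₁ x₂) (h₁ : x₁ ∈ B) (h₂ : x₂ ∈ B) (v : V) : v ∈ B := by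
  have saturate : ∀ ⦃x a⦄, G.Adj x a → a ∈ B → G.neighborSet x ⊆ B := fun x a hxa ha =>
    (hB x).resolve_right (Set.not_disjoint_iff.2 ⟨a, hxa, ha⟩)
  exact (hG.mem_of_adj_closed (P := {x | x ∈ B ∧ G.neighborSet x ⊆ B})
    (fun u v huv hu => ⟨hu.2 huv, saturate huv.symm hu.1⟩) ⟨h₁, saturate hadj h₂⟩ v).1

end SimpleGraph

theorem layer_monochromatic_general {α β : Type*}
    (G : SimpleGraph α)
    (hG : G.Connected)
    (B W : Set (α × β))
    (hdisj : Disjoint B W)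
    (hmono : ∀ (x : α) (y : β),
      ({p : α × β | p.1 ∈ G.neighborSet x ∧ p.2 = y} ⊆ B) ∨
      ({p : α × β | p.1 ∈ G.neighborSet x ∧ p.2 = y} ⊆ W))
    (y : β) (x1 x2 : α) (hadj : G.Adj x1 x2)
    (h1 : (x1, y) ∈ B) (h2 : (x2, y) ∈ B) :
    ∀ g : α, (g, y) ∈ B := by
  refine hG.mem_of_neighborSet_subset_or_disjoint (B := (·, y) ⁻¹' B) (fun x => ?_) hadj h1 h2
  rcases hmono x y with hB | hW
  · exact .inl fun g hg => hB ⟨hg, rfl⟩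
  · exact .inr <| Set.disjoint_left.2 fun g hg hgB => hdisj.notMem_of_mem_right (hW ⟨hg, rfl⟩) hgB

theorem layer_monochromatic {α β : Type*} [Fintype α] [Fintype β]
    (G : SimpleGraph α) (H : SimpleGraph β)
    (hG : G.Connected) (hH : H.Connected)
    (S : Set (Sym2 (α × β))) (hSsub : S ⊆ (tensorProd G H).edgeSet)
    (hSdisc : ¬ ((tensorProd G H).deleteEdges S).Connected)
    (hSmin : S.ncard = edgeConn (tensorProd G H))
    (B W : Set (α × β)) (hBne : B.Nonempty) (hWne : W.Nonempty)
    (hunion : B ∪ W = Set.univ) (hdisj : Disjoint B W)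
    (hcomp : ∀ p q : α × β, ((tensorProd G H).deleteEdges S).Reachable p q ↔
      ((p ∈ B ∧ q ∈ B) ∨ (p ∈ W ∧ q ∈ W)))
    (hmono : ∀ (x : α) (y : β),
      ({p : α × β | p.1 ∈ G.neighborSet x ∧ p.2 = y} ⊆ B) ∨
      ({p : α × β | p.1 ∈ G.neighborSet x ∧ p.2 = y} ⊆ W))
    (y : β) (x1 x2 : α) (hadj : G.Adj x1 x2)
    (h1 : (x1, y) ∈ B) (h2 : (x2, y) ∈ B) :
    ∀ g : α, (g, y) ∈ B :=
  layer_monochromatic_general G hG B W hdisj hmono y x1 x2 hadj h1 h2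
end
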